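/- Fix β>0 and θ,α∈ℝ. The function m^{α,θ} is a space–time harmonic function of total mass one for the CSBP kernels: (i) for every t>0, ∫_0^∞ m^{α,θ}(t,z) q^θ_t(z) dz = 1; (ii) for all u,t>0 and every x≥0, ∫_0^∞ m^{α,θ}(u+t,y) q^θ_t(x,y) dy = m^{α,θ}(u,x) (note m^{α,θ}(u+t,0)=0, so the extinction atom does not contribute). -/

import Mathlib

open MeasureTheory Filter

/-- `c^θ_t` from the paper, with time-scale parameter `β`. -/
noncomputable def cc (β θ t : ℝ) : ℝ :=
  if θ = 0 then 1 / (β * t) else 2 * θ / (Real.exp (2 * β * θ * t) - 1)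

/-- `c̃^θ_t` from the paper. -/
noncomputable def cct (β θ t : ℝ) : ℝ :=
  if θ = 0 then 1 / (β * t) else 2 * θ / (1 - Real.exp (-(2 * β * θ * t)))

/-- `u^θ(λ, t)` from the paper. -/
noncomputable def uu (β θ l t : ℝ) : ℝ :=
  if t = 0 then l else l * cc β θ t / (cct β θ t + l)

/-- entrance density `q^θ_t(x)`. -/
noncomputable def qe (β θ t x : ℝ) : ℝ :=
  cc β θ t * cct β θ t * Real.exp (-(cct β θ t * x))

/-- transition density `q^θ_t(x, y)`. -/
noncomputable def qt (β θ t x y : ℝ) : ℝ :=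
  x * cc β θ t * cct β θ t * Real.exp (-((x + y) * cc β θ t) - 2 * θ * y) *
    ∑' k : ℕ, (x * y * cc β θ t * cct β θ t) ^ k /
      ((Nat.factorial k : ℝ) * (Nat.factorial (k + 1) : ℝ))

/-- the space-time harmonic function `m^{α,θ}(t, z)`. -/
noncomputable def mm (β θ α t z : ℝ) : ℝ :=
  z * Real.exp (-(α / cc β θ t)) *
    ∑' i : ℕ, (α * z) ^ i * Real.exp (((i : ℝ) + 1) * (2 * β * θ * t)) /
      ((Nat.factorial i : ℝ) * (Nat.factorial (i + 1) : ℝ))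

/-- the space-time harmonic function `m̃^{α,θ}(t, z)`. -/
noncomputable def mmt (β θ α t z : ℝ) : ℝ :=
  z * Real.exp (2 * θ * z) * Real.exp (-(α / cct β θ t)) *
    ∑' i : ℕ, (α * z) ^ i * Real.exp (-(((i : ℝ) + 1) * (2 * β * θ * t))) /
      ((Nat.factorial i : ℝ) * (Nat.factorial (i + 1) : ℝ))

/-!
Both kernels and `m^{α,θ}` are built from `ψ(w) = ∑ wᵏ / (k! (k+1)!)`:
`m^{α,θ}(t, z) = e^{-α/c_t} e^{2βθt} z ψ(α e^{2βθt} z)` and, since `c̃_t = c_t + 2θ`,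
`q_t(x, y) = x c_t c̃_t e^{-x c_t} e^{-c̃_t y} ψ(x c_t c̃_t y)`. Both claims therefore reduce to
the Laplace transform `∫₀^∞ y ψ(ay) ψ(by) e^{-sy} dy = e^{(a+b)/s} ψ(ab/s²) / s²` (with `b = 0`
for the entrance law). Integrating the double series termwise against Gamma integrals, this is the
power series identity `e^{A+B} ψ(AB) = ∑ Aⁱ Bᵏ (i+k+1)! / (i! (i+1)! k! (k+1)!)`, whose coefficients
are a Vandermonde convolution. The constants then match because `c̃_t = c_t e^{2βθt}` and
`1/c_{u+t} = e^{2βθu}/c_t + 1/c_u`.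
-/

open Real Set
open scoped Nat

lemma integrableOn_pow_mul_exp_neg_mul (n : ℕ) {s : ℝ} (hs : 0 < s) :
    IntegrableOn (fun y : ℝ => y ^ n * exp (-(s * y))) (Ioi 0) := by
  simpa [neg_mul] using integrableOn_rpow_mul_exp_neg_mul_rpow (p := 1) (s := (n : ℝ))
    (by linarith [n.cast_nonneg (α := ℝ)]) one_pos hs

lemma integral_pow_mul_exp_neg_mul (n : ℕ) {s : ℝ} (hs : 0 < s) :
    ∫ y in Ioi 0, y ^ n * exp (-(s * y)) = n ! / s ^ (n + 1) := by
  have h := integral_rpow_mul_exp_neg_mul_Ioi (a := n + 1) (by positivity) hs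
  rw [add_sub_cancel_right, Gamma_nat_eq_factorial, ← Nat.cast_succ] at h
  simp only [rpow_natCast] at h
  rw [h, one_div_pow, one_div_mul_eq_div, Nat.succ_eq_add_one]

/-- `ψ(w) = I₁(2√w) / √w`, in terms of the modified Bessel function `I₁`. -/
noncomputable def besselSeries (w : ℝ) : ℝ :=
  ∑' k : ℕ, w ^ k / ((k ! : ℝ) * ((k + 1)! : ℝ))

lemma summable_norm_besselSeries_term (w : ℝ) :
    Summable fun k : ℕ => ‖w ^ k / ((k ! : ℝ) * ((k + 1)! : ℝ))‖ := by
  refine .of_nonneg_of_le (fun _ => norm_nonneg _) (fun k => ?_)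
    (Real.summable_pow_div_factorial ‖w‖)
  rw [norm_div, norm_pow, norm_mul, Real.norm_natCast, Real.norm_natCast]
  exact div_le_div_of_nonneg_left (by positivity) (by positivity)
    (le_mul_of_one_le_right (by positivity) (by exact_mod_cast (k + 1).factorial_pos))

lemma hasSum_besselSeries (w : ℝ) :
    HasSum (fun k : ℕ => w ^ k / ((k ! : ℝ) * ((k + 1)! : ℝ))) (besselSeries w) :=
  (summable_norm_besselSeries_term w).of_norm.hasSum

@[simp]
lemma besselSeries_zero : besselSeries 0 = 1 := by
  rw [besselSeries, tsum_eq_single 0 (fun k hk => by simp [hk])]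
  simp

lemma hasSum_besselSeries_mul_besselSeries (a b : ℝ) :
    HasSum (fun p : ℕ × ℕ => a ^ p.1 * b ^ p.2 /
        ((p.1 ! : ℝ) * (p.1 + 1)! * p.2 ! * (p.2 + 1)!))
      (besselSeries a * besselSeries b) := by
  refine ((hasSum_besselSeries a).mul (hasSum_besselSeries b) (summable_mul_of_summable_norm
    (summable_norm_besselSeries_term a) (summable_norm_besselSeries_term b))).congr_fun
    fun p => ?_
  rw [div_mul_div_comm, ← mul_assoc]

lemma sum_choose_mul_choose_succ (i k : ℕ) :
    ∑ j ∈ Finset.range (min i k + 1), i.choose j * (k + 1).choose (j + 1) =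
      (i + k + 1).choose (i + 1) := by
  have h := Nat.add_choose_eq i (k + 1) k
  rw [Finset.Nat.sum_antidiagonal_eq_sum_range_succ_mk, ← add_assoc] at h
  rw [Nat.choose_symm_of_eq_add (by omega : i + k + 1 = (i + 1) + k), h]
  refine (Finset.sum_subset ?_ ?_).trans (Finset.sum_congr rfl ?_)
  · intro j hj
    simp only [Finset.mem_range] at hj ⊢
    omega
  · intro j hj hjmin
    simp only [Finset.mem_range] at hj hjmin
    rw [Nat.choose_eq_zero_of_lt (by omega : i < j), zero_mul]
  · intro j hj
    rw [Finset.mem_range] at hj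
    rw [Nat.choose_symm_of_eq_add (by omega : k + 1 = (j + 1) + (k - j))]

noncomputable def besselProdCoeff (i k : ℕ) : ℝ :=
  (i + k + 1)! / ((i ! : ℝ) * (i + 1)! * k ! * (k + 1)!)

lemma sum_inv_factorial_eq_besselProdCoeff (i k : ℕ) :
    ∑ j ∈ Finset.range (min i k + 1), 1 / ((j ! : ℝ) * (j + 1)! * (i - j)! * (k - j)!) =
      besselProdCoeff i k := by
  have hterm : ∀ j ∈ Finset.range (min i k + 1),
      1 / ((j ! : ℝ) * (j + 1)! * (i - j)! * (k - j)!) =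
        ((i.choose j * (k + 1).choose (j + 1) : ℕ) : ℝ) / ((i ! : ℝ) * (k + 1)!) := by
    intro j hj
    rw [Finset.mem_range] at hj
    rw [Nat.cast_mul, Nat.cast_choose ℝ (by omega : j ≤ i),
      Nat.cast_choose ℝ (by omega : j + 1 ≤ k + 1), Nat.add_sub_add_right]
    field_simp
  rw [Finset.sum_congr rfl hterm, ← Finset.sum_div, ← Nat.cast_sum, sum_choose_mul_choose_succ,
    Nat.cast_choose ℝ (by omega : i + 1 ≤ i + k + 1), besselProdCoeff,
    show i + k + 1 - (i + 1) = k by omega]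
  field_simp

lemma hasSum_besselSeries_mul_exp_mul_exp (A B : ℝ) :
    HasSum (fun q : ℕ × ℕ × ℕ => (A * B) ^ q.1 / ((q.1 ! : ℝ) * (q.1 + 1)!) *
        (A ^ q.2.1 / q.2.1 ! * (B ^ q.2.2 / q.2.2 !)))
      (besselSeries (A * B) * (exp A * exp B)) := by
  have hexp (x : ℝ) : HasSum (fun n : ℕ => x ^ n / n !) (exp x) := by
    rw [Real.exp_eq_exp_ℝ]; exact NormedSpace.expSeries_div_hasSum_exp x
  have hexp_norm (x : ℝ) : Summable fun n : ℕ => ‖x ^ n / (n ! : ℝ)‖ :=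
    NormedSpace.norm_expSeries_div_summable x
  have hAB := (hexp A).mul (hexp B) (summable_mul_of_summable_norm (hexp_norm A) (hexp_norm B))
  have hAB_norm := Summable.mul_norm (f := fun n : ℕ => A ^ n / (n ! : ℝ))
    (g := fun n : ℕ => B ^ n / (n ! : ℝ)) (hexp_norm A) (hexp_norm B)
  have hs := summable_mul_of_summable_norm (summable_norm_besselSeries_term (A * B)) hAB_norm
  simpa only using (hasSum_besselSeries (A * B)).mul hAB hs

lemma hasSum_exp_add_mul_besselSeries (A B : ℝ) :
    HasSum (fun p : ℕ × ℕ => A ^ p.1 * B ^ p.2 * besselProdCoeff p.1 p.2)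
      (exp (A + B) * besselSeries (A * B)) := by
  -- regroup the triple series over `(j, m, n)` by `(i, k) = (j + m, j + n)`
  let e : ℕ × ℕ × ℕ → (ℕ × ℕ) × ℕ := fun q => ((q.1 + q.2.1, q.1 + q.2.2), q.1)
  let S : (ℕ × ℕ) × ℕ → ℝ := fun r =>
    if r.2 ≤ r.1.1 ∧ r.2 ≤ r.1.2 then
      (A * B) ^ r.2 / ((r.2 ! : ℝ) * (r.2 + 1)!) *
        (A ^ (r.1.1 - r.2) / ((r.1.1 - r.2)! : ℝ) * (B ^ (r.1.2 - r.2) / ((r.1.2 - r.2)! : ℝ)))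
    else 0
  have he : Function.Injective e := by
    rintro ⟨j, m, n⟩ ⟨j', m', n'⟩ h
    simp only [e, Prod.mk.injEq] at h ⊢
    omega
  have hS : HasSum S (exp (A + B) * besselSeries (A * B)) := by
    rw [← he.hasSum_iff, exp_add, mul_comm]
    · refine (hasSum_besselSeries_mul_exp_mul_exp A B).congr_fun fun ⟨j, m, n⟩ => ?_
      simp [S, e]
    rintro ⟨⟨i, k⟩, j⟩ hr
    simp only [S, ite_eq_right_iff]
    refine fun hj => absurd ⟨(j, i - j, k - j), ?_⟩ hr
    simp only [e, Prod.mk.injEq, and_true]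
    omega
  have hfiber (i k : ℕ) : HasSum (fun j => S ((i, k), j))
      (∑ j ∈ Finset.range (min i k + 1), S ((i, k), j)) :=
    hasSum_sum_of_ne_finset_zero fun j hj => by
      rw [Finset.mem_range] at hj
      simp only [S, if_neg (by omega : ¬(j ≤ i ∧ j ≤ k))]
  refine hS.prod_fiberwise fun ⟨i, k⟩ => ?_
  convert hfiber i k using 1
  rw [← sum_inv_factorial_eq_besselProdCoeff, Finset.mul_sum]
  refine Finset.sum_congr rfl fun j hj => ?_
  rw [Finset.mem_range] at hj
  simp only [S, if_pos (⟨by omega, by omega⟩ : j ≤ i ∧ j ≤ k)]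
  rw [← pow_mul_pow_sub A (by omega : j ≤ i), ← pow_mul_pow_sub B (by omega : j ≤ k)]
  field_simp
  ring

lemma integral_mul_besselSeries_mul_besselSeries (a b : ℝ) {s : ℝ} (hs : 0 < s) :
    ∫ y in Ioi 0, y * besselSeries (a * y) * besselSeries (b * y) * exp (-(s * y)) =
      exp ((a + b) / s) * besselSeries (a * b / s ^ 2) / s ^ 2 := by
  let c (a b : ℝ) (p : ℕ × ℕ) : ℝ :=
    a ^ p.1 * b ^ p.2 / ((p.1 ! : ℝ) * (p.1 + 1)! * p.2 ! * (p.2 + 1)!)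
  let F (a b : ℝ) (p : ℕ × ℕ) (y : ℝ) : ℝ := c a b p * (y ^ (p.1 + p.2 + 1) * exp (-(s * y)))
  have hF_int (p : ℕ × ℕ) : IntegrableOn (F a b p) (Ioi 0) :=
    (integrableOn_pow_mul_exp_neg_mul _ hs).const_mul _
  have hF_integral (a b : ℝ) (p : ℕ × ℕ) : ∫ y in Ioi 0, F a b p y =
      (a / s) ^ p.1 * (b / s) ^ p.2 * besselProdCoeff p.1 p.2 / s ^ 2 := by
    rw [integral_const_mul, integral_pow_mul_exp_neg_mul _ hs, besselProdCoeff, div_pow, div_pow]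
    simp only [c]
    field_simp
    ring
  have hF_norm (p : ℕ × ℕ) : ∫ y in Ioi 0, ‖F a b p y‖ = ∫ y in Ioi 0, F |a| |b| p y := by
    refine setIntegral_congr_fun measurableSet_Ioi fun y (hy : 0 < y) => ?_
    simp only [F, c, norm_mul, norm_div, norm_pow, Real.norm_eq_abs, abs_of_pos hy,
      abs_of_pos (exp_pos _), Nat.abs_cast]
  have hsum := (hasSum_exp_add_mul_besselSeries (|a| / s) (|b| / s)).div_const (s ^ 2)
  have hint := hasSum_integral_of_summable_integral_norm hF_int <| hsum.summable.congr fun p => by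
    rw [hF_norm, hF_integral]
  have hF_sum (y : ℝ) : ∑' p, F a b p y =
      y * besselSeries (a * y) * besselSeries (b * y) * exp (-(s * y)) := by
    have hprod := (hasSum_besselSeries_mul_besselSeries (a * y) (b * y)).mul_right
      (y * exp (-(s * y)))
    rw [(hprod.congr_fun fun p => ?_).tsum_eq]
    · ring
    simp only [F, c, mul_pow, pow_add]
    ring
  simp only [← hF_sum]
  have hval := ((hasSum_exp_add_mul_besselSeries (a / s) (b / s)).div_const (s ^ 2)).congr_fun
    (hF_integral a b)
  rw [hint.unique hval, add_div, div_mul_div_comm, sq]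

lemma integral_mul_besselSeries_mul_exp (a : ℝ) {s : ℝ} (hs : 0 < s) :
    ∫ y in Ioi 0, y * besselSeries (a * y) * exp (-(s * y)) = exp (a / s) / s ^ 2 := by
  simpa using integral_mul_besselSeries_mul_besselSeries a 0 hs

lemma cc_pos {β θ t : ℝ} (hβ : 0 < β) (ht : 0 < t) : 0 < cc β θ t := by
  unfold cc
  split_ifs with hθ
  · positivity
  have hβt : 0 < β * t := mul_pos hβ ht
  rcases lt_or_gt_of_ne hθ with hθ | hθ
  · refine div_pos_of_neg_of_neg (by linarith) (sub_neg.2 (exp_lt_one_iff.2 ?_))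
    nlinarith
  · refine div_pos (by linarith) (sub_pos.2 (one_lt_exp_iff.2 ?_))
    nlinarith

lemma cct_eq_cc_mul_exp (β θ t : ℝ) : cct β θ t = cc β θ t * exp (2 * β * θ * t) := by
  unfold cc cct
  split_ifs
  · simp_all
  rw [exp_neg, show 1 - (exp (2 * β * θ * t))⁻¹ = (exp (2 * β * θ * t) - 1) / exp (2 * β * θ * t)
    by field_simp, div_div_eq_mul_div, div_mul_eq_mul_div]

lemma cct_pos {β θ t : ℝ} (hβ : 0 < β) (ht : 0 < t) : 0 < cct β θ t := by
  rw [cct_eq_cc_mul_exp]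
  exact mul_pos (cc_pos hβ ht) (exp_pos _)

lemma cct_eq_cc_add {β θ t : ℝ} (hβ : β ≠ 0) (ht : t ≠ 0) : cct β θ t = cc β θ t + 2 * θ := by
  rw [cct_eq_cc_mul_exp]
  unfold cc
  split_ifs with hθ
  · simp [hθ]
  have hE : exp (2 * β * θ * t) - 1 ≠ 0 := by
    rw [sub_ne_zero, Ne, exp_eq_one_iff]
    positivity
  rw [div_mul_eq_mul_div, div_add' _ _ _ hE]
  ring

lemma inv_cc_add (β θ u t : ℝ) :
    (cc β θ (u + t))⁻¹ = exp (2 * β * θ * u) * (cc β θ t)⁻¹ + (cc β θ u)⁻¹ := by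
  unfold cc
  split_ifs
  · subst_vars
    simp only [mul_zero, zero_mul, exp_zero, one_div, inv_inv, one_mul]
    ring
  simp only [inv_div, mul_add, exp_add]
  ring

lemma mm_eq_besselSeries (β θ α t z : ℝ) :
    mm β θ α t z = exp (-(α / cc β θ t)) * exp (2 * β * θ * t) *
      (z * besselSeries (α * exp (2 * β * θ * t) * z)) := by
  rw [mm, besselSeries, ← tsum_mul_left, ← tsum_mul_left, ← tsum_mul_left]
  refine tsum_congr fun i => ?_
  rw [add_mul, one_mul, exp_add, exp_nat_mul]
  ring

lemma qt_eq_besselSeries {β θ t : ℝ} (hβ : β ≠ 0) (ht : t ≠ 0) (x y : ℝ) :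
    qt β θ t x y = x * cc β θ t * cct β θ t * exp (-(x * cc β θ t)) *
      (besselSeries (x * cc β θ t * cct β θ t * y) * exp (-(cct β θ t * y))) := by
  rw [qt, besselSeries, cct_eq_cc_add hβ ht,
    show -((x + y) * cc β θ t) - 2 * θ * y = -(x * cc β θ t) + -((cc β θ t + 2 * θ) * y) by ring,
    exp_add]
  ring_nf

lemma integral_mm_mul_qe {β : ℝ} (hβ : 0 < β) (θ α : ℝ) {t : ℝ} (ht : 0 < t) :
    ∫ z in Ioi 0, mm β θ α t z * qe β θ t z = 1 := by
  have hc := cc_pos (θ := θ) hβ ht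
  have hct := cct_pos (θ := θ) hβ ht
  have h (z : ℝ) : mm β θ α t z * qe β θ t z =
      exp (-(α / cc β θ t)) * exp (2 * β * θ * t) * cc β θ t * cct β θ t *
        (z * besselSeries (α * exp (2 * β * θ * t) * z) * exp (-(cct β θ t * z))) := by
    rw [mm_eq_besselSeries, qe]
    ring
  simp_rw [h, integral_const_mul, integral_mul_besselSeries_mul_exp _ hct]
  rw [cct_eq_cc_mul_exp] at hct ⊢
  field_simp
  rw [← exp_add, neg_add_cancel, exp_zero]

lemma integral_mm_add_mul_qt {β : ℝ} (hβ : 0 < β) (θ α u : ℝ) {t : ℝ} (ht : 0 < t) (x : ℝ) :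
    ∫ y in Ioi 0, mm β θ α (u + t) y * qt β θ t x y = mm β θ α u x := by
  have hc := cc_pos (θ := θ) hβ ht
  have hE : exp (2 * β * θ * (u + t)) = exp (2 * β * θ * u) * exp (2 * β * θ * t) := by
    rw [mul_add, exp_add]
  have hs : 0 < cc β θ t * exp (2 * β * θ * t) := by positivity
  have h (y : ℝ) : mm β θ α (u + t) y * qt β θ t x y =
      exp (-(α / cc β θ (u + t))) * exp (2 * β * θ * (u + t)) *
        (x * cc β θ t * cct β θ t * exp (-(x * cc β θ t))) *
        (y * besselSeries (α * exp (2 * β * θ * (u + t)) * y) *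
          besselSeries (x * cc β θ t * cct β θ t * y) * exp (-(cct β θ t * y))) := by
    rw [mm_eq_besselSeries, qt_eq_besselSeries hβ.ne' ht.ne']
    ring
  simp_rw [h, integral_const_mul, cct_eq_cc_mul_exp,
    integral_mul_besselSeries_mul_besselSeries _ _ hs, mm_eq_besselSeries, hE]
  have harg : α * (exp (2 * β * θ * u) * exp (2 * β * θ * t)) *
      (x * cc β θ t * (cc β θ t * exp (2 * β * θ * t))) / (cc β θ t * exp (2 * β * θ * t)) ^ 2 =
      α * exp (2 * β * θ * u) * x := by
    field_simp
  have hexp : exp (-(α / cc β θ (u + t))) *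
      exp ((α * (exp (2 * β * θ * u) * exp (2 * β * θ * t)) +
        x * cc β θ t * (cc β θ t * exp (2 * β * θ * t))) / (cc β θ t * exp (2 * β * θ * t))) *
      exp (-(x * cc β θ t)) = exp (-(α / cc β θ u)) := by
    rw [← exp_add, ← exp_add, div_eq_mul_inv α (cc β θ (u + t)), inv_cc_add]
    congr 1
    field_simp
    ring
  rw [harg, ← hexp]
  field_simp

/-- The function `m^{α,θ}` is a space–time harmonic function of total mass one for the
CSBP kernels: (i) `∫_0^∞ m^{α,θ}(t,z) q^θ_t(z) dz = 1` for every `t > 0`;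
(ii) `∫_0^∞ m^{α,θ}(u+t,y) q^θ_t(x,y) dy = m^{α,θ}(u,x)` for all `u, t > 0` and `x ≥ 0`. -/
theorem mm_harmonic (β θ α : ℝ) (hβ : 0 < β) :
    (∀ t : ℝ, 0 < t → (∫ z in Set.Ioi (0 : ℝ), mm β θ α t z * qe β θ t z) = 1) ∧
    (∀ u t : ℝ, 0 < u → 0 < t → ∀ x : ℝ, 0 ≤ x →
      (∫ y in Set.Ioi (0 : ℝ), mm β θ α (u + t) y * qt β θ t x y) = mm β θ α u x) :=
  ⟨fun _ ht => integral_mm_mul_qe hβ θ α ht,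
    fun u _ _ ht x _ => integral_mm_add_mul_qt hβ θ α u ht x⟩
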